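/- arXiv:2511.22316 — 3 statements merged into one kernel-verified Lean document; each statement's English description precedes it below -/
import Mathlib

section
/- Let V = (a, b) ∈ ℝ² with a + b ≠ 0, and set θ* = arctan((b − a)/(a + b)). Let G* be the rotation matrix with rows (cos θ*, −sin θ*) and (sin θ*, cos θ*). Then writing VG* = (x₁, x₂), one has |x₁| = |x₂| = √((a² + b²)/2); in particular ‖VG*‖_∞ = √((a² + b²)/2). -/
open Matrix Real

/-!
Write `t = (b - a)/(a + b)`, so that `θ = arctan t` satisfies `sin θ = t cos θ`, i.e.
`(a + b) sin θ = (b - a) cos θ`. This is exactly the condition for the two coordinates of the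
rotated vector `VG` to coincide. A rotation preserves `x₁² + x₂² = a² + b²`, so each coordinate
squares to `(a² + b²)/2`.
-/

lemma vecMul_rotation (a b θ : ℝ) :
    ![a, b] ᵥ* !![cos θ, -sin θ; sin θ, cos θ] =
      ![a * cos θ + b * sin θ, -(a * sin θ) + b * cos θ] := by
  ext i
  fin_cases i <;> simp [vecMul, dotProduct, Fin.sum_univ_two]

lemma rotation_sq_add_sq (a b θ : ℝ) :
    (a * cos θ + b * sin θ) ^ 2 + (-(a * sin θ) + b * cos θ) ^ 2 = a ^ 2 + b ^ 2 := by
  linear_combination (a ^ 2 + b ^ 2) * sin_sq_add_cos_sq θ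

lemma rotation_coords_eq_of_mul_sin_eq {a b θ : ℝ} (h : (a + b) * sin θ = (b - a) * cos θ) :
    -(a * sin θ) + b * cos θ = a * cos θ + b * sin θ := by
  linear_combination -h

lemma mul_sin_arctan_div {p q : ℝ} (hq : q ≠ 0) :
    q * sin (arctan (p / q)) = p * cos (arctan (p / q)) := by
  rw [← tan_mul_cos (cos_arctan_pos _).ne', tan_arctan, ← mul_assoc, mul_div_cancel₀ _ hq]

lemma abs_eq_sqrt_half_of_eq_of_sq_add_sq {x y s : ℝ} (hxy : y = x) (hs : x ^ 2 + y ^ 2 = s) :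
    |x| = √(s / 2) := by
  rw [← sqrt_sq_eq_abs, ← hs, hxy]
  ring_nf

/-- Let `V = (a, b) ∈ ℝ²` with `a + b ≠ 0` and set `θ* = arctan ((b − a)/(a + b))`.
Let `G*` be the rotation matrix with rows `(cos θ*, −sin θ*)` and `(sin θ*, cos θ*)`.
Writing `VG* = (x₁, x₂)`, one has `|x₁| = |x₂| = √((a² + b²)/2)`;
in particular `‖VG*‖_∞ = √((a² + b²)/2)`. -/
theorem abs_vecMul_optimal_rotation (a b : ℝ) (hab : a + b ≠ 0)
    (θ : ℝ) (hθ : θ = Real.arctan ((b - a) / (a + b)))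
    (G : Matrix (Fin 2) (Fin 2) ℝ)
    (hG : G = !![Real.cos θ, -Real.sin θ; Real.sin θ, Real.cos θ]) :
    |(![a, b] ᵥ* G) 0| = Real.sqrt ((a ^ 2 + b ^ 2) / 2) ∧
    |(![a, b] ᵥ* G) 1| = Real.sqrt ((a ^ 2 + b ^ 2) / 2) ∧
    max |(![a, b] ᵥ* G) 0| |(![a, b] ᵥ* G) 1| = Real.sqrt ((a ^ 2 + b ^ 2) / 2) := by
  have hsin : (a + b) * sin θ = (b - a) * cos θ := hθ ▸ mul_sin_arctan_div hab
  have hcoords := rotation_coords_eq_of_mul_sin_eq hsin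
  have habs := abs_eq_sqrt_half_of_eq_of_sq_add_sq hcoords (rotation_sq_add_sq a b θ)
  subst hG
  simp only [vecMul_rotation, cons_val_zero, cons_val_one, hcoords, habs, max_self, and_self]
end

section
/- Let V = (a, b) ∈ ℝ² be a row vector with a + b ≠ 0. Then the minimum over all orthogonal matrices G ∈ O(2) of ‖VG‖_∞ exists and equals √((a² + b²)/2); i.e., √((a² + b²)/2) is the least element of the set {‖VG‖_∞ : G ∈ O(2)}. -/
/-!
An orthogonal `G` preserves the Euclidean norm, so the coordinates `x, y` of `VG` satisfy
`x² + y² = a² + b²`, and `max |x| |y|` is at least their quadratic mean `√((a² + b²)/2)`.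
Equality holds for the reflection of `ℝ²` that sends `V` to the diagonal vector `(s, s)`,
`s = √((a² + b²)/2)`, which has the same Euclidean norm as `V`.
-/

open Matrix

theorem Matrix.vecMul_dotProduct_vecMul_of_transpose_mul_self_eq_one {n R : Type*} [Fintype n]
    [DecidableEq n] [CommSemiring R] {G : Matrix n n R} (hG : Gᵀ * G = 1) (v : n → R) :
    v ᵥ* G ⬝ᵥ v ᵥ* G = v ⬝ᵥ v := by
  rw [← dotProduct_mulVec, ← vecMul_transpose, vecMul_vecMul, mul_eq_one_comm.mp hG, vecMul_one]

theorem Matrix.transpose_mul_self_fin_two_reflection_eq_one {R : Type*} [CommRing R] {p q : R}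
    (h : p ^ 2 + q ^ 2 = 1) : !![p, q; q, -p]ᵀ * !![p, q; q, -p] = 1 := by
  have hsymm : !![p, q; q, -p]ᵀ = !![p, q; q, -p] := by
    ext i j; fin_cases i <;> fin_cases j <;> rfl
  rw [hsymm, mul_fin_two, one_fin_two]
  exact congrArg of (vec2_eq (vec2_eq (by linear_combination h) (by ring))
    (vec2_eq (by ring) (by linear_combination h)))

theorem Matrix.vecMul_fin_two_reflection {R : Type*} [CommRing R] (a b p q : R) :
    ![a, b] ᵥ* !![p, q; q, -p] = ![a * p + b * q, a * q - b * p] := by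
  simp [sub_eq_add_neg]

theorem Real.sqrt_sq_add_sq_div_two_le_max_abs (x y : ℝ) :
    √((x ^ 2 + y ^ 2) / 2) ≤ max |x| |y| := by
  rw [Real.sqrt_le_left (le_max_of_le_left (abs_nonneg x))]
  have hx : x ^ 2 ≤ max |x| |y| ^ 2 := by
    rw [← sq_abs x]; gcongr; exact le_max_left _ _
  have hy : y ^ 2 ≤ max |x| |y| ^ 2 := by
    rw [← sq_abs y]; gcongr; exact le_max_right _ _
  linarith

theorem exists_transpose_mul_self_eq_one_vecMul_eq_const (a b : ℝ) :
    ∃ G : Matrix (Fin 2) (Fin 2) ℝ, Gᵀ * G = 1 ∧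
      ![a, b] ᵥ* G = ![√((a ^ 2 + b ^ 2) / 2), √((a ^ 2 + b ^ 2) / 2)] := by
  set s := √((a ^ 2 + b ^ 2) / 2)
  have hs : s ^ 2 = (a ^ 2 + b ^ 2) / 2 := Real.sq_sqrt (by positivity)
  rcases eq_or_ne s 0 with hs0 | hs0
  · have ha : a = 0 := by nlinarith
    have hb : b = 0 := by nlinarith
    exact ⟨1, by simp, by simp [ha, hb, hs0]⟩
  set p := (a - b) / (2 * s) with hp
  set q := (a + b) / (2 * s) with hq
  have hpq : p ^ 2 + q ^ 2 = 1 := by rw [hp, hq]; field_simp; linear_combination -4 * hs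
  have hfst : a * p + b * q = s := by rw [hp, hq]; field_simp; linear_combination -2 * hs
  have hsnd : a * q - b * p = s := by rw [hp, hq]; field_simp; linear_combination -2 * hs
  refine ⟨!![p, q; q, -p], transpose_mul_self_fin_two_reflection_eq_one hpq, ?_⟩
  rw [vecMul_fin_two_reflection, hfst, hsnd]

theorem isLeast_sup_norm_vecMul_orthogonal_general (a b : ℝ) :
    IsLeast
      {t : ℝ | ∃ G : Matrix (Fin 2) (Fin 2) ℝ, Gᵀ * G = 1 ∧
        t = max |(![a, b] ᵥ* G) 0| |(![a, b] ᵥ* G) 1|}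
      (Real.sqrt ((a ^ 2 + b ^ 2) / 2)) := by
  constructor
  · obtain ⟨G, hG, hVG⟩ := exists_transpose_mul_self_eq_one_vecMul_eq_const a b
    refine ⟨G, hG, ?_⟩
    rw [hVG, cons_val_zero, cons_val_one, cons_val_zero, max_self,
      abs_of_nonneg (Real.sqrt_nonneg _)]
  · rintro t ⟨G, hG, rfl⟩
    have hnorm := vecMul_dotProduct_vecMul_of_transpose_mul_self_eq_one hG ![a, b]
    rw [vec2_dotProduct, vec2_dotProduct, cons_val_zero, cons_val_one, cons_val_zero] at hnorm
    calc √((a ^ 2 + b ^ 2) / 2)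
        = √(((![a, b] ᵥ* G) 0 ^ 2 + (![a, b] ᵥ* G) 1 ^ 2) / 2) := by rw [sq, sq, sq, sq, hnorm]
      _ ≤ _ := Real.sqrt_sq_add_sq_div_two_le_max_abs _ _

/-- Let `V = (a, b) ∈ ℝ²` be a row vector with `a + b ≠ 0`. Then the minimum over all
orthogonal `G ∈ O(2)` of `‖VG‖_∞` exists and equals `√((a² + b²)/2)`: it is the least
element of the set `{‖VG‖_∞ : G ∈ O(2)}`. -/
theorem isLeast_sup_norm_vecMul_orthogonal (a b : ℝ) (hab : a + b ≠ 0) :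
    IsLeast
      {t : ℝ | ∃ G : Matrix (Fin 2) (Fin 2) ℝ, Gᵀ * G = 1 ∧
        t = max |(![a, b] ᵥ* G) 0| |(![a, b] ᵥ* G) 1|}
      (Real.sqrt ((a ^ 2 + b ^ 2) / 2)) :=
  isLeast_sup_norm_vecMul_orthogonal_general a b
end

section
/- Let V = (a, b) ∈ ℝ² with a + b ≠ 0, let θ* = arctan((b − a)/(a + b)), and let G* be the rotation matrix with rows (cos θ*, −sin θ*) and (sin θ*, cos θ*). Then G* minimizes the function Φ(G) = ‖VG‖_∞ over all orthogonal matrices G ∈ O(2): for every G ∈ O(2), ‖VG*‖_∞ ≤ ‖VG‖_∞. -/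
open Matrix

/-- Let `V = (a, b) ∈ ℝ²` with `a + b ≠ 0`, let `θ* = arctan ((b − a)/(a + b))`, and let
`G*` be the rotation matrix with rows `(cos θ*, −sin θ*)` and `(sin θ*, cos θ*)`.
Then `G*` minimizes `Φ(G) = ‖VG‖_∞` over all orthogonal matrices `G ∈ O(2)`:
for every `G` with `GᵀG = I`, `‖VG*‖_∞ ≤ ‖VG‖_∞`. -/
theorem optimal_rotation_minimizes_sup_norm (a b : ℝ) (hab : a + b ≠ 0)
    (θ : ℝ) (hθ : θ = Real.arctan ((b - a) / (a + b)))
    (Gstar : Matrix (Fin 2) (Fin 2) ℝ)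
    (hGstar : Gstar = !![Real.cos θ, -Real.sin θ; Real.sin θ, Real.cos θ]) :
    ∀ G : Matrix (Fin 2) (Fin 2) ℝ, Gᵀ * G = 1 →
      max |(![a, b] ᵥ* Gstar) 0| |(![a, b] ᵥ* Gstar) 1| ≤
        max |(![a, b] ᵥ* G) 0| |(![a, b] ᵥ* G) 1| := by
  intro G hG
  have hG' : G * Gᵀ = 1 := by
    rwa [mul_eq_one_comm] at hG
  have h00 : G 0 0 * G 0 0 + G 0 1 * G 0 1 = 1 := by
    have := congrFun (congrFun hG' 0) 0
    simpa [Matrix.mul_apply, Fin.sum_univ_two, Matrix.one_apply] using this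
  have h11 : G 1 0 * G 1 0 + G 1 1 * G 1 1 = 1 := by
    have := congrFun (congrFun hG' 1) 1
    simpa [Matrix.mul_apply, Fin.sum_univ_two, Matrix.one_apply] using this
  have h01 : G 0 0 * G 1 0 + G 0 1 * G 1 1 = 0 := by
    have := congrFun (congrFun hG' 0) 1
    simpa [Matrix.mul_apply, Fin.sum_univ_two, Matrix.one_apply] using this
  set x := (![a, b] ᵥ* G) 0 with hx
  set y := (![a, b] ᵥ* G) 1 with hy
  have hxv : x = a * G 0 0 + b * G 1 0 := by
    simp [hx, Matrix.vecMul, dotProduct, Fin.sum_univ_two]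
  have hyv : y = a * G 0 1 + b * G 1 1 := by
    simp [hy, Matrix.vecMul, dotProduct, Fin.sum_univ_two]
  clear_value x y
  have hnorm : x ^ 2 + y ^ 2 = a ^ 2 + b ^ 2 := by
    rw [hxv, hyv]; linear_combination (a^2) * h00 + (b^2) * h11 + (2*a*b) * h01
  -- components of V * Gstar
  set t : ℝ := (b - a) / (a + b) with ht
  have hcos : Real.cos θ = 1 / Real.sqrt (1 + t ^ 2) := by
    rw [hθ, Real.cos_arctan]
  have hsin : Real.sin θ = t / Real.sqrt (1 + t ^ 2) := by
    rw [hθ, Real.sin_arctan]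
  set s : ℝ := Real.sqrt (1 + t ^ 2) with hs
  have hspos : 0 < s := Real.sqrt_pos.2 (by positivity)
  have hs2 : s ^ 2 = 1 + t ^ 2 := Real.sq_sqrt (by positivity)
  have hc0 : (![a, b] ᵥ* Gstar) 0 = (a + b * t) / s := by
    simp [hGstar, Matrix.vecMul, dotProduct, Fin.sum_univ_two, hcos, hsin]
    field_simp
  have hc1 : (![a, b] ᵥ* Gstar) 1 = (b - a * t) / s := by
    simp [hGstar, Matrix.vecMul, dotProduct, Fin.sum_univ_two, hcos, hsin]
    field_simp
    ring
  have heq : a + b * t = b - a * t := by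
    rw [ht]; field_simp; ring
  have hab2 : a ^ 2 + b ^ 2 ≠ 0 := by
    intro h
    apply hab
    have ha2 : a ^ 2 = 0 := le_antisymm (by nlinarith [sq_nonneg b]) (sq_nonneg a)
    have hb2 : b ^ 2 = 0 := le_antisymm (by nlinarith [sq_nonneg a]) (sq_nonneg b)
    rw [sq_eq_zero_iff.1 ha2, sq_eq_zero_iff.1 hb2, add_zero]
  have hs2' : s ^ 2 = 2 * (a ^ 2 + b ^ 2) / (a + b) ^ 2 := by
    rw [hs2, ht]; field_simp; ring
  have habt2 : (a + b * t) ^ 2 = (a ^ 2 + b ^ 2) ^ 2 / (a + b) ^ 2 := by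
    rw [ht]; field_simp; ring
  have hcval : ((a + b * t) / s) ^ 2 = (a ^ 2 + b ^ 2) / 2 := by
    rw [div_pow, habt2, hs2']
    field_simp
  rw [hc0, hc1, ← heq, max_self]
  set c : ℝ := (a + b * t) / s with hc
  set m : ℝ := max |x| |y| with hm
  have hm0 : 0 ≤ m := le_trans (abs_nonneg x) (le_max_left _ _)
  have hxm : |x| ≤ m := le_max_left _ _
  have hym : |y| ≤ m := le_max_right _ _
  clear_value m
  clear hx hy hxv hyv hc0 hc1 hcos hsin h00 h11 h01 hG hG' hGstar hθ G Gstar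
  have hx2 : x ^ 2 ≤ m ^ 2 := by rw [← sq_abs x]; exact pow_le_pow_left₀ (abs_nonneg x) hxm 2
  have hy2 : y ^ 2 ≤ m ^ 2 := by rw [← sq_abs y]; exact pow_le_pow_left₀ (abs_nonneg y) hym 2
  have hc2 : 2 * (c ^ 2) = a ^ 2 + b ^ 2 := by rw [hc, hcval]; ring
  clear_value c
  have hcm : c ^ 2 ≤ m ^ 2 := by linarith [hnorm, hc2, hx2, hy2]
  calc |c| = Real.sqrt (c ^ 2) := (Real.sqrt_sq_eq_abs c).symm
    _ ≤ Real.sqrt (m ^ 2) := Real.sqrt_le_sqrt hcm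
    _ = m := Real.sqrt_sq hm0
end
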